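/- If an infinite word w avoids k-th powers for some k ≥ 2, then the palindromic length of its prefixes is unbounded: for every P there exists a prefix u of w such that u cannot be written as a concatenation of at most P palindromes. -/

import Mathlib

/-- `wpow u k` is the `k`-fold concatenation of the word `u`. -/
def wpow {A : Type*} (u : List A) (k : ℕ) : List A :=
  (List.replicate k u).flatten

/-- The factor of length `n` of the infinite word `w` starting at position `i`. -/
def wordFactor {A : Type*} (w : ℕ → A) (i n : ℕ) : List A :=
  (List.range n).map (fun t => w (i + t))

/-- `w` avoids `k`-th powers: no factor of `w` is of the form `u^k` with `u` nonempty. -/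
def AvoidsPower {A : Type*} (w : ℕ → A) (k : ℕ) : Prop :=
  ∀ u : List A, u ≠ [] → ∀ i : ℕ, wpow u k ≠ wordFactor w i (wpow u k).length

/-
Two palindromes starting at the same position of a `k`-power-free word, of lengths `l < l'`,
satisfy `k * l < (k - 1) * l'`: otherwise the longer one, which has period `l' - l`, has length
at least `k * (l' - l)` and so begins with a `k`-th power. Hence only `O(k log N)` palindromes
of length at most `N` start at any position, and only `O(k log N) ^ P` of the `N + 1` prefixes of length at most `N`
are products of at most `P` palindromes, which is fewer than `N + 1` once `N = 2 ^ m` is large.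
-/

open Finset

section

variable {A : Type*}

@[simp]
lemma wpow_succ (u : List A) (c : ℕ) : wpow u (c + 1) = u ++ wpow u c := by
  simp [wpow, List.replicate_succ]

section wordFactor

variable (w : ℕ → A)

@[simp]
lemma length_wordFactor (i n : ℕ) : (wordFactor w i n).length = n := by
  simp [wordFactor]

lemma wordFactor_add (i a b : ℕ) :
    wordFactor w i (a + b) = wordFactor w i a ++ wordFactor w (i + a) b := by
  simp [wordFactor, List.range_add, Nat.add_assoc, Function.comp_def]

lemma wordFactor_congr {w' : ℕ → A} {i i' n : ℕ} (h : ∀ j < n, w (i + j) = w' (i' + j)) :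
    wordFactor w i n = wordFactor w' i' n :=
  List.map_congr_left fun t ht => h t (List.mem_range.mp ht)

lemma wordFactor_eq_append {i n : ℕ} {u₁ u₂ : List A} (h : wordFactor w i n = u₁ ++ u₂) :
    u₁ = wordFactor w i u₁.length ∧ u₂ = wordFactor w (i + u₁.length) u₂.length := by
  have hn : n = u₁.length + u₂.length := by simpa using congrArg List.length h
  rw [hn, wordFactor_add] at h
  obtain ⟨h₁, h₂⟩ := List.append_inj h (by simp)
  exact ⟨h₁.symm, h₂.symm⟩

lemma apply_add_eq_of_palindrome_wordFactor {i n : ℕ} (h : (wordFactor w i n).Palindrome)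
    {t : ℕ} (ht : t < n) : w (i + t) = w (i + (n - 1 - t)) := by
  have key := congrArg (·[t]?) h.reverse_eq
  rw [List.getElem?_reverse (l := wordFactor w i n) (by simpa using ht)] at key
  simpa [wordFactor, ht, show n - 1 - t < n by omega] using key.symm

lemma wordFactor_mul_eq_wpow_of_period {i n p : ℕ}
    (hper : ∀ j, j + p < n → w (i + j) = w (i + j + p)) {c : ℕ} (hc : c * p ≤ n) :
    wordFactor w i (c * p) = wpow (wordFactor w i p) c := by
  induction c with
  | zero => simp [wordFactor, wpow]
  | succ c ih =>
    have hshift : wordFactor w (i + p) (c * p) = wordFactor w i (c * p) :=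
      wordFactor_congr w fun j hj => by rw [hper j (by nlinarith)]; ring_nf
    rw [wpow_succ, ← ih (by nlinarith), ← hshift, ← wordFactor_add, Nat.succ_mul,
      Nat.add_comm]

end wordFactor

namespace AvoidsPower

variable {w : ℕ → A} {k : ℕ}

lemma not_periodic (hw : AvoidsPower w k) {i n p : ℕ} (hp : 0 < p) (hkp : k * p ≤ n) :
    ¬ ∀ j, j + p < n → w (i + j) = w (i + j + p) := by
  intro hper
  have hu : wordFactor w i p ≠ [] := by
    simpa [← List.length_pos_iff] using hp
  apply hw _ hu i
  rw [← wordFactor_mul_eq_wpow_of_period w hper hkp, length_wordFactor]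

/-- The palindrome of length `l'` has period `l' - l`, being reflected once in its own centre and
once in that of its prefix of length `l`. -/
lemma mul_lt_of_palindrome (hw : AvoidsPower w k) {i l l' : ℕ} (hl : 0 < l) (hll' : l < l')
    (hp : (wordFactor w i l).Palindrome) (hp' : (wordFactor w i l').Palindrome) :
    k * l < (k - 1) * l' := by
  by_contra! hle
  have hkp : k * (l' - l) ≤ l' := by
    obtain ⟨d, rfl⟩ := Nat.exists_eq_add_of_le hll'.le
    rcases k with _ | k
    · simp
    · simp only [Nat.add_sub_cancel_left, Nat.add_sub_cancel] at hle ⊢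
      nlinarith
  apply hw.not_periodic (i := i) (by omega) hkp
  intro j hj
  rw [apply_add_eq_of_palindrome_wordFactor w hp (by omega),
    apply_add_eq_of_palindrome_wordFactor w hp' (by omega)]
  congr 1
  omega

end AvoidsPower

lemma pow_card_le_of_chain {a b x : ℕ} {S : Finset ℕ} (hpos : ∀ y ∈ S, 0 < y)
    (hchain : ∀ y ∈ S, ∀ z ∈ S, y < z → a * y ≤ b * z) (hx : 0 < x)
    (hbound : ∀ y ∈ S, a * y ≤ b * x) : a ^ #S ≤ b ^ #S * x := by
  induction S using Finset.induction_on_max generalizing x with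
  | empty => simpa using Nat.one_le_of_lt hx
  | insert m s hlt ih =>
    have hm : ∀ y ∈ s, a * y ≤ b * m := fun y hy =>
      hchain y (mem_insert_of_mem hy) m (mem_insert_self m s) (hlt y hy)
    have ih' := ih (fun y hy => hpos y (mem_insert_of_mem hy))
      (fun y hy z hz => hchain y (mem_insert_of_mem hy) z (mem_insert_of_mem hz))
      (hpos m (mem_insert_self m s)) hm
    rw [card_insert_of_notMem fun hms => (hlt m hms).false]
    calc a ^ (#s + 1) = a ^ #s * a := pow_succ a #s
      _ ≤ b ^ #s * m * a := Nat.mul_le_mul_right a ih'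
      _ = b ^ #s * (a * m) := by ring
      _ ≤ b ^ #s * (b * x) := Nat.mul_le_mul_left _ (hbound m (mem_insert_self m s))
      _ = b ^ (#s + 1) * x := by ring

/-- Bernoulli's inequality `(1 + 1 / K) ^ n ≥ 1 + n / K`, with denominators cleared. -/
lemma pow_mul_add_le_succ_pow_mul (K n : ℕ) : K ^ n * (K + n) ≤ (K + 1) ^ n * K := by
  induction n with
  | zero => simp
  | succ n ih =>
    calc K ^ (n + 1) * (K + (n + 1)) = K ^ n * (K * (K + n + 1)) := by ring
      _ ≤ K ^ n * ((K + 1) * (K + n)) := Nat.mul_le_mul_left _ (by nlinarith)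
      _ = (K + 1) * (K ^ n * (K + n)) := by ring
      _ ≤ (K + 1) * ((K + 1) ^ n * K) := Nat.mul_le_mul_left _ ih
      _ = (K + 1) ^ (n + 1) * K := by ring

lemma two_mul_pow_self_le_succ_pow {K : ℕ} (hK : 0 < K) : 2 * K ^ K ≤ (K + 1) ^ K := by
  refine Nat.le_of_mul_le_mul_right ?_ hK
  calc 2 * K ^ K * K = K ^ K * (K + K) := by ring
    _ ≤ (K + 1) ^ K * K := pow_mul_add_le_succ_pow_mul K K

/-- By Bernoulli, every `K` consecutive factors `(K + 1) / K` multiply to at least `2`. -/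
lemma lt_mul_log_of_succ_pow_le {K c M : ℕ} (hK : 0 < K) (h : (K + 1) ^ c ≤ K ^ c * M) :
    c < K * (Nat.log 2 M + 1) := by
  obtain ⟨q, r, hr, rfl⟩ : ∃ q r, r < K ∧ c = K * q + r :=
    ⟨c / K, c % K, Nat.mod_lt c hK, (Nat.div_add_mod c K).symm⟩
  have hdouble : 2 ^ q * K ^ (K * q + r) ≤ K ^ (K * q + r) * M :=
    calc 2 ^ q * K ^ (K * q + r) = (2 * K ^ K) ^ q * K ^ r := by
          rw [mul_pow, ← pow_mul, pow_add]; ring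
      _ ≤ ((K + 1) ^ K) ^ q * (K + 1) ^ r :=
          Nat.mul_le_mul (Nat.pow_le_pow_left (two_mul_pow_self_le_succ_pow hK) q)
            (Nat.pow_le_pow_left K.le_succ r)
      _ = (K + 1) ^ (K * q + r) := by rw [← pow_mul, ← pow_add]
      _ ≤ K ^ (K * q + r) * M := h
  have hq : q ≤ Nat.log 2 M := Nat.le_log_of_pow_le one_lt_two <|
    Nat.le_of_mul_le_mul_right (by linarith [hdouble]) (Nat.pow_pos hK)
  nlinarith

open Classical in
noncomputable def palLengths (w : ℕ → A) (i N : ℕ) : Finset ℕ :=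
  {l ∈ Icc 1 N | (wordFactor w i l).Palindrome}

@[simp]
lemma mem_palLengths {w : ℕ → A} {i N l : ℕ} :
    l ∈ palLengths w i N ↔ (0 < l ∧ l ≤ N) ∧ (wordFactor w i l).Palindrome := by
  simp [palLengths, Nat.one_le_iff_ne_zero, Nat.pos_iff_ne_zero]

lemma AvoidsPower.card_palLengths_lt {w : ℕ → A} {k : ℕ} (hk : 2 ≤ k) (hw : AvoidsPower w k)
    (i N : ℕ) : #(palLengths w i N) < (k - 1) * (Nat.log 2 (2 * N) + 1) := by
  rcases N.eq_zero_or_pos with rfl | hN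
  · simp only [palLengths, Icc_eq_empty_of_lt zero_lt_one, filter_empty, card_empty]
    exact Nat.mul_pos (by omega) (Nat.succ_pos _)
  apply lt_mul_log_of_succ_pow_le (by omega)
  rw [Nat.sub_add_cancel (by omega : 1 ≤ k)]
  refine pow_card_le_of_chain (fun y hy => (mem_palLengths.1 hy).1.1) ?_ (by omega) ?_
  · intro y hy z hz hyz
    rw [mem_palLengths] at hy hz
    exact (hw.mul_lt_of_palindrome hy.1.1 hyz hy.2 hz.2).le
  · intro y hy
    have hyN := (mem_palLengths.1 hy).1.2
    calc k * y ≤ k * N := Nat.mul_le_mul_left k hyN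
      _ ≤ (k - 1) * (2 * N) := by
        rw [← mul_assoc]; exact Nat.mul_le_mul_right N (by omega)

def PalLengthLE (u : List A) (q : ℕ) : Prop :=
  ∃ L : List (List A), L.length ≤ q ∧ (∀ p ∈ L, p.Palindrome) ∧ L.flatten = u

namespace PalLengthLE

variable {u : List A} {q : ℕ}

lemma eq_nil (h : PalLengthLE u 0) : u = [] := by
  obtain ⟨L, hL, -, rfl⟩ := h
  simp [List.length_eq_zero_iff.mp (Nat.le_zero.mp hL)]

lemma exists_append_palindrome (h : PalLengthLE u (q + 1)) :
    ∃ u₁ u₂, u = u₁ ++ u₂ ∧ PalLengthLE u₁ q ∧ u₂.Palindrome := by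
  obtain ⟨L, hL, hpal, rfl⟩ := h
  rcases L.eq_nil_or_concat' with rfl | ⟨L', p, rfl⟩
  · exact ⟨[], [], rfl, ⟨[], by simp⟩, List.Palindrome.nil⟩
  · refine ⟨L'.flatten, p, by simp, ⟨L', by simpa using hL, ?_, rfl⟩, hpal p (by simp)⟩
    exact fun p' hp' => hpal p' (by simp [hp'])

end PalLengthLE

open Classical in
noncomputable def palPrefixLengths (w : ℕ → A) (N q : ℕ) : Finset ℕ :=
  {n ∈ range (N + 1) | PalLengthLE (wordFactor w 0 n) q}

@[simp]
lemma mem_palPrefixLengths {w : ℕ → A} {N q n : ℕ} :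
    n ∈ palPrefixLengths w N q ↔ n ≤ N ∧ PalLengthLE (wordFactor w 0 n) q := by
  simp [palPrefixLengths]

lemma palPrefixLengths_succ_subset (w : ℕ → A) (N q : ℕ) :
    palPrefixLengths w N (q + 1) ⊆
      (palPrefixLengths w N q).biUnion fun n => (insert 0 (palLengths w n N)).image (n + ·) := by
  intro n hn
  rw [mem_palPrefixLengths] at hn
  obtain ⟨u₁, u₂, hu, hu₁, hu₂⟩ := hn.2.exists_append_palindrome
  obtain ⟨h₁, h₂⟩ := wordFactor_eq_append w hu
  rw [h₁] at hu₁
  rw [h₂, zero_add] at hu₂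
  have hn_eq : n = u₁.length + u₂.length := by simpa using congrArg List.length hu
  simp only [mem_biUnion, mem_image, mem_insert, mem_palPrefixLengths, mem_palLengths]
  refine ⟨u₁.length, ⟨by omega, hu₁⟩, u₂.length, ?_, hn_eq.symm⟩
  rcases u₂.length.eq_zero_or_pos with h0 | hpos
  · exact Or.inl h0
  · exact Or.inr ⟨⟨hpos, by omega⟩, hu₂⟩

lemma card_palPrefixLengths_le {w : ℕ → A} {N B : ℕ} (hB : ∀ i, #(palLengths w i N) ≤ B)
    (q : ℕ) : #(palPrefixLengths w N q) ≤ (B + 1) ^ q := by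
  induction q with
  | zero =>
    calc #(palPrefixLengths w N 0) ≤ #{0} := card_le_card fun n hn => by
          rw [mem_palPrefixLengths] at hn
          simpa using congrArg List.length hn.2.eq_nil
      _ = (B + 1) ^ 0 := by simp
  | succ q ih =>
    calc #(palPrefixLengths w N (q + 1))
        ≤ ∑ n ∈ palPrefixLengths w N q, #((insert 0 (palLengths w n N)).image (n + ·)) :=
          (card_le_card (palPrefixLengths_succ_subset w N q)).trans card_biUnion_le
      _ ≤ ∑ n ∈ palPrefixLengths w N q, (B + 1) := sum_le_sum fun n _ =>
          card_image_le.trans ((card_insert_le _ _).trans (Nat.succ_le_succ (hB n)))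
      _ = #(palPrefixLengths w N q) * (B + 1) := by rw [sum_const, smul_eq_mul]
      _ ≤ (B + 1) ^ (q + 1) := by rw [pow_succ]; exact Nat.mul_le_mul_right _ ih

lemma exists_pow_le_two_pow (a P : ℕ) : ∃ m, (a * (m + 2)) ^ P ≤ 2 ^ m := by
  set C : ℝ := ((3 * a : ℕ) : ℝ) ^ P + 1
  have hC : 0 < C := by positivity
  have hsmall := (isLittleO_pow_const_const_pow_of_one_lt (R := ℝ) P one_lt_two).bound
    (inv_pos.mpr hC)
  obtain ⟨m, hm, hm1⟩ := (hsmall.and (Filter.eventually_ge_atTop 1)).exists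
  refine ⟨m, ?_⟩
  simp only [norm_pow, RCLike.norm_natCast, Real.norm_ofNat] at hm
  have hlin : a * (m + 2) ≤ 3 * a * m := by nlinarith
  have hcast : ((a * (m + 2)) ^ P : ℕ) ≤ C * (m : ℝ) ^ P := by
    calc ((a * (m + 2)) ^ P : ℕ) ≤ (((3 * a * m) ^ P : ℕ) : ℝ) := by
          exact_mod_cast Nat.pow_le_pow_left hlin P
      _ = ((3 * a : ℕ) : ℝ) ^ P * (m : ℝ) ^ P := by push_cast; ring
      _ ≤ C * (m : ℝ) ^ P := by gcongr; linarith
  have : ((a * (m + 2)) ^ P : ℕ) ≤ ((2 ^ m : ℕ) : ℝ) := by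
    calc ((a * (m + 2)) ^ P : ℕ) ≤ C * (m : ℝ) ^ P := hcast
      _ ≤ C * (C⁻¹ * 2 ^ m) := by gcongr
      _ = ((2 ^ m : ℕ) : ℝ) := by field_simp; push_cast; ring
  exact_mod_cast this

end

theorem palindromic_length_unbounded_of_avoids_power {A : Type*} (w : ℕ → A)
    (k : ℕ) (hk : 2 ≤ k) (hw : AvoidsPower w k) :
    ∀ P : ℕ, ∃ n : ℕ,
      ¬ ∃ L : List (List A), L.length ≤ P ∧ (∀ p ∈ L, p.Palindrome) ∧
        L.flatten = wordFactor w 0 n := by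
  intro P
  obtain ⟨m, hm⟩ := exists_pow_le_two_pow k P
  set N := 2 ^ m
  have hlog : Nat.log 2 (2 * N) = m + 1 := by rw [← pow_succ', Nat.log_pow one_lt_two]
  have hpal (i : ℕ) : #(palLengths w i N) ≤ (k - 1) * (m + 2) :=
    (hlog ▸ hw.card_palLengths_lt hk i N).le
  have hB : (k - 1) * (m + 2) + 1 ≤ k * (m + 2) := by
    rw [Nat.sub_one_mul]
    have := Nat.le_mul_of_pos_left (m + 2) (by omega : 0 < k)
    omega
  have hcount : #(palPrefixLengths w N P) ≤ N :=
    (card_palPrefixLengths_le hpal P).trans ((Nat.pow_le_pow_left hB P).trans hm)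
  by_contra! hall
  have : range (N + 1) ⊆ palPrefixLengths w N P := fun n hn =>
    mem_palPrefixLengths.2 ⟨Nat.lt_succ_iff.1 (mem_range.1 hn), hall n⟩
  simpa using (card_le_card this).trans hcount
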